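/- Let p be a target probability density and q₁,…,q_M proposal densities on a measurable space X, with n_m i.i.d. samples x_{m,1},…,x_{m,n_m} drawn from each q_m. Assume that for every x with p(x)·f(x) ≠ 0, the mixture Σ_j n_j q_j(x) > 0. Then the balance-heuristic multiple importance sampling estimator Σ_{m=1}^M Σ_{l=1}^{n_m} p(x_{m,l}) f(x_{m,l}) / (Σ_{j=1}^M n_j q_j(x_{m,l})) is an unbiased estimator of E_p[f(X)], i.e., its expectation equals ∫ f(x) p(x) dx. -/

import Mathlib

/-!
Each sample `x m l` has density `q m`, so by linearity of expectation the estimator has mean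
`∑ m, n m * ∫ q m * g` with `g = p f / ∑ j, n j q j`, that is `∫ (∑ m, n m q m) * g`. The
balance-heuristic weights `n m q m / ∑ j, n j q j` sum to one wherever `p f ≠ 0`, so this is
`∫ p f`.
-/

open MeasureTheory Finset

theorem abs_mul_div_le_abs {a b : ℝ} (c : ℝ) (ha : 0 ≤ a) (hab : a ≤ b) : |a * (c / b)| ≤ |c| := by
  rcases (ha.trans hab).eq_or_lt with hb | hb
  · simp [← hb]
  · calc |a * (c / b)| = a / b * |c| := by
          rw [abs_mul, abs_div, abs_of_nonneg ha, abs_of_pos hb, mul_div_assoc', div_mul_eq_mul_div]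
      _ ≤ 1 * |c| := by gcongr; exact div_le_one_of_le₀ hab hb.le
      _ = |c| := one_mul _

section

variable {X Ω : Type*} [MeasurableSpace X] [MeasurableSpace Ω] {μ : Measure X} {P : Measure Ω}

theorem MeasureTheory.Integrable.mul_div_of_le {a b c : X → ℝ} (hc : Integrable c μ) (ha : AEMeasurable a μ)
    (hb : AEMeasurable b μ) (ha0 : ∀ y, 0 ≤ a y) (hab : ∀ y, a y ≤ b y) :
    Integrable (fun y => a y * (c y / b y)) μ :=
  hc.mono (ha.mul (hc.aemeasurable.div hb)).aestronglyMeasurable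
    (ae_of_all _ fun y => abs_mul_div_le_abs (c y) (ha0 y) (hab y))

theorem sum_integral_mul_div_sum_eq_integral {ι : Type*} [Fintype ι] {w : ι → X → ℝ}
    (hw : ∀ i, AEMeasurable (w i) μ) (hw0 : ∀ i y, 0 ≤ w i y) {c : X → ℝ} (hc : Integrable c μ)
    (hsupp : ∀ y, c y ≠ 0 → 0 < ∑ i, w i y) :
    ∑ i, ∫ y, w i y * (c y / ∑ j, w j y) ∂μ = ∫ y, c y ∂μ := by
  have hS : AEMeasurable (fun y => ∑ j, w j y) μ := Finset.aemeasurable_fun_sum _ fun j _ => hw j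
  rw [← integral_finsetSum _ fun i _ => hc.mul_div_of_le (hw i) hS (hw0 i)
    fun y => single_le_sum (fun j _ => hw0 j y) (mem_univ i)]
  congr 1 with y
  rw [← Finset.sum_mul]
  exact mul_div_cancel_of_imp' fun h0 => by_contra fun hcy => (hsupp y hcy).ne' h0

section Density

variable {Y : Ω → X} {q : X → ℝ} {g : X → ℝ}

theorem aestronglyMeasurable_map_of_map_eq_withDensity
    (hlaw : P.map Y = μ.withDensity fun y => ENNReal.ofReal (q y))
    (hg : AEStronglyMeasurable g μ) : AEStronglyMeasurable g (P.map Y) :=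
  hlaw ▸ hg.mono_ac (withDensity_absolutelyContinuous _ _)

theorem integral_comp_of_map_eq_withDensity (hY : AEMeasurable Y P) (hq : AEMeasurable q μ)
    (hq0 : ∀ y, 0 ≤ q y) (hlaw : P.map Y = μ.withDensity fun y => ENNReal.ofReal (q y))
    (hg : AEStronglyMeasurable g μ) :
    ∫ ω, g (Y ω) ∂P = ∫ y, q y * g y ∂μ := by
  rw [← integral_map hY (aestronglyMeasurable_map_of_map_eq_withDensity hlaw hg), hlaw,
    integral_withDensity_eq_integral_toReal_smul₀ hq.ennreal_ofReal
      (ae_of_all _ fun _ => ENNReal.ofReal_lt_top)]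
  simp_rw [ENNReal.toReal_ofReal (hq0 _), smul_eq_mul]

theorem integrable_comp_iff_of_map_eq_withDensity (hY : AEMeasurable Y P) (hq : AEMeasurable q μ)
    (hq0 : ∀ y, 0 ≤ q y) (hlaw : P.map Y = μ.withDensity fun y => ENNReal.ofReal (q y))
    (hg : AEStronglyMeasurable g μ) :
    Integrable (fun ω => g (Y ω)) P ↔ Integrable (fun y => q y * g y) μ := by
  rw [← Function.comp_def,
    ← integrable_map_measure (aestronglyMeasurable_map_of_map_eq_withDensity hlaw hg) hY, hlaw,
    integrable_withDensity_iff_integrable_smul₀' hq.ennreal_ofReal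
      (ae_of_all _ fun _ => ENNReal.ofReal_lt_top)]
  simp_rw [ENNReal.toReal_ofReal (hq0 _), smul_eq_mul]

end Density

theorem integral_sum_comp_of_map_eq_withDensity {ι : Type*} [Fintype ι] {Y : ι → Ω → X}
    (hY : ∀ i, AEMeasurable (Y i) P) {q : ι → X → ℝ} (hq : ∀ i, AEMeasurable (q i) μ)
    (hq0 : ∀ i y, 0 ≤ q i y)
    (hlaw : ∀ i, P.map (Y i) = μ.withDensity fun y => ENNReal.ofReal (q i y)) {g : X → ℝ}
    (hg : AEStronglyMeasurable g μ) (hint : ∀ i, Integrable (fun y => q i y * g y) μ) :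
    ∫ ω, ∑ i, g (Y i ω) ∂P = ∑ i, ∫ y, q i y * g y ∂μ := by
  rw [integral_finsetSum _ fun i _ =>
    (integrable_comp_iff_of_map_eq_withDensity (hY i) (hq i) (hq0 i) (hlaw i) hg).2 (hint i)]
  exact Finset.sum_congr rfl fun i _ =>
    integral_comp_of_map_eq_withDensity (hY i) (hq i) (hq0 i) (hlaw i) hg

end

theorem mis_balance_heuristic_unbiased_general
    {X : Type*} [MeasurableSpace X] (μ : Measure X)
    {Ω : Type*} [MeasurableSpace Ω] (P : Measure Ω)
    (M : ℕ) (n : Fin M → ℕ)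
    (p : X → ℝ) (q : Fin M → X → ℝ) (f : X → ℝ)
    (hq0 : ∀ m x, 0 ≤ q m x)
    (hqmeas : ∀ m, Measurable (q m))
    (hfint : Integrable (fun x => f x * p x) μ)
    -- samples: x m l is the l-th i.i.d. sample from the distribution with density q m
    (x : (m : Fin M) → Fin (n m) → Ω → X)
    (hxmeas : ∀ m l, Measurable (x m l))
    (hlaw : ∀ m l, Measure.map (x m l) P = μ.withDensity (fun y => ENNReal.ofReal (q m y)))
    -- support condition: the mixture is positive wherever p·f ≠ 0
    (hsupp : ∀ y, p y * f y ≠ 0 → 0 < ∑ j, (n j : ℝ) * q j y) :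
    ∫ ω, (∑ m, ∑ l : Fin (n m),
        p (x m l ω) * f (x m l ω) / ∑ j, (n j : ℝ) * q j (x m l ω)) ∂P
      = ∫ y, f y * p y ∂μ := by
  set g : X → ℝ := fun y => p y * f y / ∑ j, (n j : ℝ) * q j y
  have hpf : Integrable (fun y => p y * f y) μ := by simpa only [mul_comm] using hfint
  have hw : ∀ j, AEMeasurable (fun y => (n j : ℝ) * q j y) μ :=
    fun j => ((hqmeas j).const_mul _).aemeasurable
  have hw0 : ∀ j y, 0 ≤ (n j : ℝ) * q j y := fun j y => mul_nonneg (Nat.cast_nonneg _) (hq0 j y)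
  have hS : AEMeasurable (fun y => ∑ j, (n j : ℝ) * q j y) μ :=
    Finset.aemeasurable_fun_sum _ fun j _ => hw j
  have hqg : ∀ i : (m : Fin M) × Fin (n m), Integrable (fun y => q i.1 y * g y) μ := fun ⟨m, l⟩ =>
    hpf.mul_div_of_le (hqmeas m).aemeasurable hS (hq0 m) fun y =>
      (le_mul_of_one_le_left (hq0 m y) (by exact_mod_cast l.pos)).trans
        (single_le_sum (fun j _ => hw0 j y) (mem_univ m))
  calc ∫ ω, ∑ m, ∑ l : Fin (n m), g (x m l ω) ∂P
      = ∫ ω, ∑ i : (m : Fin M) × Fin (n m), g (x i.1 i.2 ω) ∂P := by simp_rw [Fintype.sum_sigma]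
    _ = ∑ i : (m : Fin M) × Fin (n m), ∫ y, q i.1 y * g y ∂μ :=
        integral_sum_comp_of_map_eq_withDensity (fun i : (m : Fin M) × Fin (n m) =>
          (hxmeas i.1 i.2).aemeasurable) (fun i => (hqmeas i.1).aemeasurable) (fun i => hq0 i.1)
          (fun i => hlaw i.1 i.2)
          (hpf.aemeasurable.div hS).aestronglyMeasurable hqg
    _ = ∑ m, ∫ y, (n m : ℝ) * q m y * g y ∂μ := by
        simp [Fintype.sum_sigma, mul_assoc, integral_const_mul]
    _ = ∫ y, p y * f y ∂μ := sum_integral_mul_div_sum_eq_integral hw hw0 hpf hsupp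
    _ = ∫ y, f y * p y ∂μ := by simp_rw [mul_comm]

/-- Unbiasedness of the balance-heuristic multiple importance
sampling estimator.  `p` is the target density, `q m` the proposal densities
(w.r.t. a common σ-finite reference measure `μ`), each `x m l` is a sample
distributed according to the density `q m`, and wherever `p x * f x ≠ 0` the
mixture `∑ j, n j * q j x` is positive.  Then the expectation of the MIS
estimator with balance heuristic equals `∫ f x * p x ∂μ = E_p[f]`. -/
theorem mis_balance_heuristic_unbiased
    {X : Type*} [MeasurableSpace X] (μ : Measure X) [SigmaFinite μ]
    {Ω : Type*} [MeasurableSpace Ω] (P : Measure Ω) [IsProbabilityMeasure P]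
    (M : ℕ) (n : Fin M → ℕ)
    (p : X → ℝ) (q : Fin M → X → ℝ) (f : X → ℝ)
    (hp0 : ∀ x, 0 ≤ p x) (hq0 : ∀ m x, 0 ≤ q m x)
    (hpmeas : Measurable p) (hqmeas : ∀ m, Measurable (q m)) (hfmeas : Measurable f)
    (hpdens : ∫ x, p x ∂μ = 1)
    (hqdens : ∀ m, ∫ x, q m x ∂μ = 1)
    (hfint : Integrable (fun x => f x * p x) μ)
    -- samples: x m l is the l-th i.i.d. sample from the distribution with density q m
    (x : (m : Fin M) → Fin (n m) → Ω → X)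
    (hxmeas : ∀ m l, Measurable (x m l))
    (hlaw : ∀ m l, Measure.map (x m l) P = μ.withDensity (fun y => ENNReal.ofReal (q m y)))
    (hiid : ∀ (m m' : Fin M) (l : Fin (n m)) (l' : Fin (n m')),
        ((m : ℕ), (l : ℕ)) ≠ ((m' : ℕ), (l' : ℕ)) →
        ∀ (A B : Set X), MeasurableSet A → MeasurableSet B →
          P (x m l ⁻¹' A ∩ x m' l' ⁻¹' B) = P (x m l ⁻¹' A) * P (x m' l' ⁻¹' B))
    -- support condition: the mixture is positive wherever p·f ≠ 0
    (hsupp : ∀ y, p y * f y ≠ 0 → 0 < ∑ j, (n j : ℝ) * q j y) :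
    ∫ ω, (∑ m, ∑ l : Fin (n m),
        p (x m l ω) * f (x m l ω) / ∑ j, (n j : ℝ) * q j (x m l ω)) ∂P
      = ∫ y, f y * p y ∂μ :=
  mis_balance_heuristic_unbiased_general μ P M n p q f hq0 hqmeas hfint x hxmeas hlaw hsupp
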